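/- arXiv:1712.07121 — 8 statements merged into one kernel-verified Lean document; each statement's English description precedes it below -/
import Mathlib

section
/- Let C be a category with an initial object ⊥, a terminal object ⊤, and strong epi–mono factorizations (every morphism factors as a strong epimorphism followed by a monomorphism). Let Min denote the image of the unique morphism ⊥ ⟶ ⊤. Then Min divides every object of C: for every object X of C there exist an object S, a monomorphism m : S ⟶ X, and a strong epimorphism e : S ⟶ Min. -/
open CategoryTheory CategoryTheory.Limits

/-- In a category with initial object, terminal object and strong epi–mono factorisations,
the image `Min` of the unique morphism `⊥ ⟶ ⊤` divides every object `X`: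
`Min` is a strong-epi quotient of a subobject of `X`. -/
theorem min_divides_every_object {C : Type*} [Category C]
    [HasInitial C] [HasTerminal C] [HasStrongEpiMonoFactorisations C] (X : C) :
    ∃ (S : C) (m : S ⟶ X) (e : S ⟶ image (initial.to (⊤_ C))),
      Mono m ∧ StrongEpi e := by
  let f : ⊥_ C ⟶ X := initial.to X
  let S := image f
  let g : S ⟶ ⊤_ C := terminal.from S
  have comm : (factorThruImage f ≫ factorThruImage g) ≫ image.ι g = initial.to (⊤_ C) := by
    apply initial.hom_ext
  have : StrongEpi (factorThruImage f ≫ factorThruImage g) := strongEpi_comp _ _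
  let iso : image g ≅ image (initial.to (⊤_ C)) :=
    image.isoStrongEpiMono (factorThruImage f ≫ factorThruImage g) (image.ι g) comm
  refine ⟨S, image.ι f, factorThruImage g ≫ iso.hom, inferInstance, ?_⟩
  have : StrongEpi iso.hom := strongEpi_of_isIso _
  exact strongEpi_comp _ _
end

section
/- Let C be a category with an initial object ⊥, a terminal object ⊤, and strong epi–mono factorizations. Let Min denote the image of the unique morphism ⊥ ⟶ ⊤. For every object X of C, write Obs(X) for the image of the unique morphism X ⟶ ⊤. Then Min is isomorphic to the image of the unique morphism ⊥ ⟶ Obs(X) (i.e., Min ≅ Reach(Obs(X)) where Reach(Y) is the image of the unique morphism ⊥ ⟶ Y). -/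
open CategoryTheory CategoryTheory.Limits

/-- `Min ≅ Reach(Obs(X))`: the image of the unique morphism `⊥ ⟶ ⊤` is isomorphic to the
image of the unique morphism `⊥ ⟶ Obs(X)`, where `Obs(X)` is the image of `X ⟶ ⊤`. -/
theorem min_iso_reach_obs {C : Type*} [Category C]
    [HasInitial C] [HasTerminal C] [HasStrongEpiMonoFactorisations C] (X : C) :
    Nonempty (image (initial.to (⊤_ C)) ≅ image (initial.to (image (terminal.from X)))) := by
  exact ⟨(image.isoStrongEpiMono
    (factorThruImage (initial.to (image (terminal.from X))))
    (image.ι (initial.to (image (terminal.from X))) ≫ image.ι (terminal.from X))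
    (by apply Subsingleton.elim)).symm⟩
end

section
/- Let A be an alphabet, L : Language A a language, and M : DFA A Q a deterministic automaton with M.accepts = L. Then there exists an injective function from the set of left quotients of L, namely {D : Language A | ∃ w : List A, ∀ u, (u ∈ D ↔ w ++ u ∈ L)}, into the state set Q. (Hence the minimal automaton of L, whose states are the left quotients of L, has at most as many states as any deterministic automaton accepting L.) -/
/-- For any DFA `M` accepting the language `L`, the set of left quotients of `L`
injects into the state set `Q`: the minimal automaton of `L` has at most as many
states as any deterministic automaton accepting `L`. -/
theorem left_quotients_inject_into_states {A Q : Type*}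
    (L : Language A) (M : DFA A Q) (hM : M.accepts = L) :
    ∃ f : {D : Language A | ∃ w : List A, ∀ u : List A, (u ∈ D ↔ w ++ u ∈ L)} → Q,
      Function.Injective f := by
  have key : ∀ (w u : List A), w ++ u ∈ L ↔ M.evalFrom (M.eval w) u ∈ M.accept := by
    intro w u
    rw [← hM]
    change M.eval (w ++ u) ∈ M.accept ↔ _
    rw [DFA.eval, DFA.evalFrom_of_append]
  refine ⟨fun D => M.eval D.2.choose, fun D1 D2 h => ?_⟩
  have h1 := D1.2.choose_spec
  have h2 := D2.2.choose_spec
  ext u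
  simp only at h; rw [h1 u, h2 u, key, key, h]
end

section
/- Let A be an alphabet and N : NFA A σ a non-deterministic automaton. For a set of states S : Set σ, write Acc S for the language {w : List A | (N.evalFrom S w ∩ N.accept).Nonempty}. Suppose N is codeterministic and observable in the sense that: (i) for all words w and states q, q', if w ∈ Acc {q} and w ∈ Acc {q'} then q = q'; and (ii) every state is useful: for each q : σ there exists w with w ∈ Acc {q}. Then the subset construction is observable: for all S, T : Set σ, if Acc S = Acc T then S = T. (This injectivity is the key step in the correctness of Brzozowski's minimization algorithm: determinizing a codeterministic, useful automaton yields a minimal deterministic automaton on its reachable states.) -/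
/-- The language accepted from a set of states `S` of the NFA `N`. -/
def nfaAcc {A σ : Type*} (N : NFA A σ) (S : Set σ) : Language A :=
  {w : List A | (N.evalFrom S w ∩ N.accept).Nonempty}

lemma mem_nfaEvalFrom_iff {A σ : Type*} (N : NFA A σ) (S : Set σ) (w : List A) (x : σ) :
    x ∈ N.evalFrom S w ↔ ∃ q ∈ S, x ∈ N.evalFrom {q} w := by
  induction w generalizing S with
  | nil => simp [NFA.evalFrom_nil]
  | cons a w ih =>
    have hstep : ∀ T : Set σ, N.evalFrom T (a :: w) = N.evalFrom (N.stepSet T a) w :=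
      fun T => rfl
    rw [hstep, ih]
    constructor
    · rintro ⟨p, hp, hx⟩
      simp only [NFA.stepSet, Set.mem_iUnion] at hp
      obtain ⟨q, hq, hp⟩ := hp
      refine ⟨q, hq, ?_⟩
      rw [hstep, ih]
      exact ⟨p, by simp [NFA.stepSet, hp], hx⟩
    · rintro ⟨q, hq, hx⟩
      rw [hstep, ih] at hx
      obtain ⟨p, hp, hx⟩ := hx
      simp only [NFA.stepSet, Set.mem_iUnion] at hp
      obtain ⟨q', hq', hp⟩ := hp
      rw [Set.mem_singleton_iff] at hq'
      rw [hq'] at hp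
      exact ⟨p, by simp only [NFA.stepSet, Set.mem_iUnion]; exact ⟨q, hq, hp⟩, hx⟩

lemma mem_nfaAcc_iff {A σ : Type*} (N : NFA A σ) (S : Set σ) (w : List A) :
    w ∈ nfaAcc N S ↔ ∃ q ∈ S, w ∈ nfaAcc N {q} := by
  simp only [nfaAcc, Set.mem_setOf_eq]
  constructor
  · rintro ⟨x, hx, hacc⟩
    obtain ⟨q, hq, hx⟩ := (mem_nfaEvalFrom_iff N S w x).mp hx
    exact ⟨q, hq, x, hx, hacc⟩
  · rintro ⟨q, hq, x, hx, hacc⟩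
    exact ⟨x, (mem_nfaEvalFrom_iff N S w x).mpr ⟨q, hq, hx⟩, hacc⟩

/-- If the NFA `N` is codeterministic/observable on single states (distinct states accept
disjoint behaviours: `w ∈ Acc {q}` and `w ∈ Acc {q'}` imply `q = q'`) and every state is
useful (accepts some word), then the subset construction is observable:
`Acc S = Acc T` implies `S = T`. -/
theorem subset_construction_observable {A σ : Type*} (N : NFA A σ)
    (hcodet : ∀ (w : List A) (q q' : σ),
      w ∈ nfaAcc N {q} → w ∈ nfaAcc N {q'} → q = q')
    (huseful : ∀ q : σ, ∃ w : List A, w ∈ nfaAcc N {q}) :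
    ∀ S T : Set σ, nfaAcc N S = nfaAcc N T → S = T := by
  have key : ∀ S T : Set σ, nfaAcc N S = nfaAcc N T → S ⊆ T := by
    intro S T h q hq
    obtain ⟨w, hw⟩ := huseful q
    have hws : w ∈ nfaAcc N S := (mem_nfaAcc_iff N S w).mpr ⟨q, hq, hw⟩
    rw [h] at hws
    obtain ⟨q', hq', hw'⟩ := (mem_nfaAcc_iff N T w).mp hws
    exact (hcodet w q q' hw hw') ▸ hq'
  exact fun S T h => Set.Subset.antisymm (key S T h) (key T S h.symm)
end

section
/- Let B, X, Y, Z, W be types and consider Kleisli morphisms for the monad T V = B* × V + 1 with Kleisli composition ∘k as follows: (g ∘k f) x = some (u ++ v, z) if f x = some (u, y) and g y = some (v, z), and none otherwise. Let e : X → Option (List B × Y) be such that for every y : Y there exist x and u with e x = some (u, y); let m : Z → Option (List B × W) be of the form m z = some ([], i z) for an injective function i : Z → W; and let f : X → Option (List B × Z) and g : Y → Option (List B × W) satisfy m ∘k f = g ∘k e (as functions X → Option (List B × W)). Then there exists d : Y → Option (List B × Z) such that d ∘k e = f and m ∘k d = g. (This is the diagonal fill-in property of the factorization system on the Kleisli category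 for T used to minimize subsequential transducers.) -/
/-- Kleisli composition for the monad `T V = B* × V + 1`. -/
def kcomp {B X Y W : Type*} (g : Y → Option (List B × W)) (f : X → Option (List B × Y)) :
    X → Option (List B × W) := fun x =>
  match f x with
  | none => none
  | some (u, y) =>
    match g y with
    | none => none
    | some (v, z) => some (u ++ v, z)

/-- Diagonal fill-in for the factorization system on the Kleisli category of
`T V = B* × V + 1`: if `e` is surjective on the state component, `m` has trivial output
and injective state component, and `m ∘k f = g ∘k e`, then there is a diagonal
`d : Y → Option (List B × Z)` with `d ∘k e = f` and `m ∘k d = g`. -/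
theorem kleisli_diagonal_fill_in {B X Y Z W : Type*}
    (e : X → Option (List B × Y))
    (he : ∀ y : Y, ∃ (x : X) (u : List B), e x = some (u, y))
    (m : Z → Option (List B × W)) (i : Z → W) (hi : Function.Injective i)
    (hm : ∀ z : Z, m z = some ([], i z))
    (f : X → Option (List B × Z)) (g : Y → Option (List B × W))
    (hcomm : kcomp m f = kcomp g e) :
    ∃ d : Y → Option (List B × Z), kcomp d e = f ∧ kcomp m d = g := by
  classical
  have L : ∀ x u y, e x = some (u, y) →
      (g y = none ∧ f x = none) ∨
      ∃ v z, g y = some (v, i z) ∧ f x = some (u ++ v, z) := by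
    intro x u y hxy
    have h := congrFun hcomm x
    unfold kcomp at h
    rw [hxy] at h
    cases hfx : f x with
    | none =>
      rw [hfx] at h
      cases hgy : g y with
      | none => exact Or.inl ⟨rfl, rfl⟩
      | some p => simp [hgy] at h
    | some p =>
      obtain ⟨w, z⟩ := p
      rw [hfx] at h
      cases hgy : g y with
      | none => simp [hgy, hm z] at h
      | some q =>
        obtain ⟨v, w'⟩ := q
        simp [hgy, hm z] at h
        obtain ⟨h1, h2⟩ := h
        exact Or.inr ⟨v, z, by rw [← h2], by rw [h1]⟩
  choose x0 u0 hx0 using he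
  refine ⟨fun y => (f (x0 y)).map (fun p => (p.1.drop (u0 y).length, p.2)), ?_, ?_⟩
  · funext x
    unfold kcomp
    cases hex : e x with
    | none =>
      have h := congrFun hcomm x
      unfold kcomp at h
      rw [hex] at h
      cases hfx : f x with
      | none => rfl
      | some p =>
        obtain ⟨w, z⟩ := p
        simp [hfx, hm z] at h
    | some p =>
      obtain ⟨u, y⟩ := p
      rcases L x u y hex with ⟨hg, hf⟩ | ⟨v, z, hg, hf⟩
      · rcases L (x0 y) (u0 y) y (hx0 y) with ⟨_, hf0⟩ | ⟨v, z, hg0, _⟩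
        · simp [hf0, hf]
        · rw [hg] at hg0; simp at hg0
      · rcases L (x0 y) (u0 y) y (hx0 y) with ⟨hg0, _⟩ | ⟨v', z', hg0, hf0⟩
        · rw [hg] at hg0; simp at hg0
        · rw [hg] at hg0
          simp only [Option.some.injEq, Prod.mk.injEq] at hg0
          obtain ⟨hv, hz⟩ := hg0
          have hz' : z' = z := hi hz.symm
          subst hv hz'
          simp [hf0, hf]
  · funext y
    unfold kcomp
    rcases L (x0 y) (u0 y) y (hx0 y) with ⟨hg0, hf0⟩ | ⟨v, z, hg0, hf0⟩
    · simp [hf0, hg0]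
    · simp [hf0, hg0, hm z]
end

section
/- Let A and B be types and K : List A → Option (List B) a partial function which is not nowhere-defined: there exists u with (K u).isSome. Then there exists a unique pair (v, K') with v : List B and K' : List A → Option (List B) such that: (i) K u = (K' u).map (fun w => v ++ w) for every u : List A; (ii) K' is somewhere defined: there exists u with (K' u).isSome; and (iii) K' is irreducible, i.e., its defined values have empty longest common prefix: there is no letter b : B such that every w with K' u = some w (for some u) begins with b. (Here v is the longest common prefix lcp(K) of the defined values of K and K' is the reduction red(K); this decomposition is the bijection underlying the state space of the final subsequential transducer.) -/
/-- Auxiliary: a strict prefix relation between the `v`-parts of two decompositions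
contradicts the irreducibility of the first reduction. -/
lemma lcp_aux {A B : Type*} (K : List A → Option (List B))
    (v1 v2 : List B) (K1 K2 : List A → Option (List B))
    (h1 : ∀ u, K u = (K1 u).map (fun w => v1 ++ w))
    (h2 : ∀ u, K u = (K2 u).map (fun w => v2 ++ w))
    (hirr : ¬∃ b : B, ∀ u w, K1 u = some w → ∃ w', w = b :: w')
    (hpre : v1 <+: v2) (hne : v1 ≠ v2) : False := by
  obtain ⟨t, ht⟩ := hpre
  cases t with
  | nil => exact hne (by simpa using ht)
  | cons b t' =>
    apply hirr
    refine ⟨b, fun u w huw => ?_⟩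
    have hKu : K u = some (v1 ++ w) := by rw [h1 u, huw]; rfl
    have h2u := h2 u
    rw [hKu] at h2u
    cases hK2 : K2 u with
    | none => rw [hK2] at h2u; simp at h2u
    | some w2 =>
      rw [hK2] at h2u
      simp only [Option.map_some] at h2u
      have heq : v1 ++ w = v1 ++ (b :: (t' ++ w2)) := by
        rw [Option.some.inj h2u, ← ht]; simp
      exact ⟨t' ++ w2, List.append_cancel_left heq⟩

/-- Every somewhere-defined partial function `K : List A → Option (List B)` decomposes
uniquely as a longest common prefix `v` together with an irreducible reduction `K'`:
`K u = (K' u).map (v ++ ·)`, `K'` is somewhere defined, and no letter `b` is a common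
first letter of all defined values of `K'`. -/
theorem lcp_reduction_unique {A B : Type*} (K : List A → Option (List B))
    (hK : ∃ u : List A, (K u).isSome) :
    ∃! p : List B × (List A → Option (List B)),
      (∀ u : List A, K u = (p.2 u).map (fun w => p.1 ++ w)) ∧
      (∃ u : List A, (p.2 u).isSome) ∧
      ¬∃ b : B, ∀ (u : List A) (w : List B), p.2 u = some w → ∃ w', w = b :: w' := by
  classical
  obtain ⟨u0, hu0⟩ := hK
  obtain ⟨w0, hw0⟩ := Option.isSome_iff_exists.mp hu0
  set P : ℕ → Prop := fun n => ∀ u w, K u = some w → w0.take n <+: w with hPdef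
  have hP0 : P 0 := fun u w _ => by simp
  set N := Nat.findGreatest P w0.length with hNdef
  have hPN : P N := Nat.findGreatest_spec (Nat.zero_le _) hP0
  have hNle : N ≤ w0.length := Nat.findGreatest_le _
  set v : List B := w0.take N with hvdef
  have hvlen : v.length = N := by simp [hvdef, hNle]
  set K' : List A → Option (List B) := fun u => (K u).map (fun w => w.drop N)
    with hK'def
  -- every defined value of K decomposes as v ++ (drop N)
  have hdecomp : ∀ u w, K u = some w → w = v ++ w.drop N := by
    intro u w huw
    have hpre : v <+: w := hPN u w huw
    have : v = w.take N := by
      have := List.prefix_iff_eq_take.mp hpre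
      rwa [hvlen] at this
    conv_lhs => rw [← List.take_append_drop N w, ← this]
  have hmap : ∀ u : List A, K u = (K' u).map (fun w => v ++ w) := by
    intro u
    cases huw : K u with
    | none => simp [hK'def, huw]
    | some w =>
      simp only [hK'def, huw, Option.map_some]
      exact congrArg some (hdecomp u w huw)
  have hsome : ∃ u, (K' u).isSome := ⟨u0, by simp [hK'def, hw0]⟩
  have hirr : ¬∃ b : B, ∀ u w, K' u = some w → ∃ w', w = b :: w' := by
    rintro ⟨b, hb⟩
    have hK'u0 : K' u0 = some (w0.drop N) := by simp [hK'def, hw0]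
    obtain ⟨w', hw'⟩ := hb u0 _ hK'u0
    have hNlt : N < w0.length := by
      by_contra h
      have : w0.drop N = [] := List.drop_eq_nil_of_le (le_of_not_gt h)
      rw [this] at hw'; exact (List.cons_ne_nil b w') hw'.symm
    have hPN1 : P (N + 1) := by
      intro u w huw
      have hK'u : K' u = some (w.drop N) := by simp [hK'def, huw]
      obtain ⟨w'', hw''⟩ := hb u _ hK'u
      have h1 : w0.take (N + 1) = v ++ [b] := by
        rw [List.take_add, ← hvdef, hw']; rfl
      have h2 : w = v ++ (b :: w'') := by
        rw [hdecomp u w huw, hw'']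
      rw [h1, h2]
      exact ⟨w'', by simp⟩
    have := Nat.le_findGreatest hNlt hPN1
    omega
  refine ⟨(v, K'), ⟨hmap, hsome, hirr⟩, ?_⟩
  rintro ⟨v2, K2⟩ ⟨h2map, h2some, h2irr⟩
  -- first show v2 = v
  have hveq : v2 = v := by
    obtain ⟨u1, hu1⟩ := h2some
    obtain ⟨w1, hw1⟩ := Option.isSome_iff_exists.mp hu1
    have hKu1 : K u1 = some (v2 ++ w1) := by rw [h2map u1, hw1]; rfl
    have hvpre : v <+: v2 ++ w1 := hPN u1 _ hKu1
    have hv2pre : v2 <+: v2 ++ w1 := List.prefix_append v2 w1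
    rcases List.prefix_or_prefix_of_prefix hv2pre hvpre with h | h
    · by_contra hne
      exact lcp_aux K v2 v K2 K' h2map hmap h2irr h hne
    · by_contra hne
      exact lcp_aux K v v2 K' K2 hmap h2map hirr h (fun e => hne e.symm)
  subst hveq
  have hKeq : K2 = K' := by
    funext u
    have h1 := hmap u
    have h2 := h2map u
    rw [h1] at h2
    exact (Option.map_injective (fun x y h => List.append_cancel_left h) h2.symm)
  simp [hKeq]
end

section
/- Let A be a type and X a type equipped with functions l : FreeMonoid A → X → X and r : FreeMonoid A → X → X such that l is a left action (l 1 x = x and l (u * v) x = l u (l v x)), r is a right action (r 1 x = x and r (u * v) x = r v (r u x)), and the two actions commute (l u (r v x) = r v (l u x) for all u, v, x). Let φ : FreeMonoid A → X be surjective and equivariant for both actions: φ (u * w) = l u (φ w) and φ (w * v) = r v (φ w) for all u, v, w. Then there exists a monoid structure on X such that φ is a monoid homomorphism (φ (u * v) = φ u * φ v and φ 1 = 1) and moreover l u x = φ u * x and r v x = x * φ v for all u, v : FreeMonoid A and x : X. (Every surjective A*-biaction recognizer is a surjective monoid recognizer.) -/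
/-- Every surjective `A*`-biaction recognizer is a surjective monoid recognizer:
if `X` carries commuting left and right `FreeMonoid A`-actions and
`φ : FreeMonoid A → X` is a surjective morphism of biactions, then `X` carries a monoid
structure making `φ` a monoid homomorphism, with the actions given by multiplication. -/
theorem surjective_biaction_recognizer_is_monoid_recognizer {A : Type*} {X : Type*}
    (l : FreeMonoid A → X → X) (r : FreeMonoid A → X → X)
    (hl_one : ∀ x : X, l 1 x = x)
    (hl_mul : ∀ (u v : FreeMonoid A) (x : X), l (u * v) x = l u (l v x))
    (hr_one : ∀ x : X, r 1 x = x)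
    (hr_mul : ∀ (u v : FreeMonoid A) (x : X), r (u * v) x = r v (r u x))
    (hcomm : ∀ (u v : FreeMonoid A) (x : X), l u (r v x) = r v (l u x))
    (φ : FreeMonoid A → X) (hφ : Function.Surjective φ)
    (hφl : ∀ u w : FreeMonoid A, φ (u * w) = l u (φ w))
    (hφr : ∀ v w : FreeMonoid A, φ (w * v) = r v (φ w)) :
    ∃ (mul : X → X → X) (one : X),
      (∀ x y z : X, mul (mul x y) z = mul x (mul y z)) ∧
      (∀ x : X, mul one x = x) ∧
      (∀ x : X, mul x one = x) ∧
      (∀ u v : FreeMonoid A, φ (u * v) = mul (φ u) (φ v)) ∧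
      φ 1 = one ∧
      (∀ (u : FreeMonoid A) (x : X), l u x = mul (φ u) x) ∧
      (∀ (v : FreeMonoid A) (x : X), r v x = mul x (φ v)) := by
  -- well-definedness: l depends only on φ u
  have hwd : ∀ u u' : FreeMonoid A, φ u = φ u' → ∀ y : X, l u y = l u' y := by
    intro u u' h y
    obtain ⟨w, rfl⟩ := hφ y
    rw [← hφl, ← hφl, hφr, hφr, h]
  classical
  set mul : X → X → X := fun x y => l (Classical.choose (hφ x)) y with hmul
  have key : ∀ (u : FreeMonoid A) (y : X), l u y = mul (φ u) y := by
    intro u y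
    exact hwd u _ (Classical.choose_spec (hφ (φ u))).symm y
  refine ⟨mul, φ 1, ?_, ?_, ?_, ?_, rfl, key, ?_⟩
  · intro x y z
    obtain ⟨u, rfl⟩ := hφ x
    obtain ⟨v, rfl⟩ := hφ y
    calc mul (mul (φ u) (φ v)) z = mul (φ (u * v)) z := by rw [hφl, key]
      _ = l (u * v) z := (key _ _).symm
      _ = l u (l v z) := hl_mul _ _ _
      _ = mul (φ u) (mul (φ v) z) := by rw [key v z, key u]
  · intro x
    rw [← key, hl_one]
  · intro x
    obtain ⟨u, rfl⟩ := hφ x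
    rw [← key, ← hφl, mul_one]
  · intro u v
    rw [hφl, key]
  · intro v x
    obtain ⟨w, rfl⟩ := hφ x
    rw [← hφr, hφl, key]
end

section
/- Let A be a type and L a set of elements of FreeMonoid A. Define the syntactic congruence of L as the relation on FreeMonoid A given by u ≈ v iff for all x, y : FreeMonoid A, (x * u * y ∈ L ↔ x * v * y ∈ L). Then: (i) ≈ is a monoid congruence on FreeMonoid A; let Q be the quotient monoid and π : FreeMonoid A →* Q the projection; (ii) Q recognizes L via π, i.e., L = π ⁻¹' (π '' L); and (iii) the syntactic monoid divides every monoid recognizing L: for every monoid M, every monoid homomorphism φ : FreeMonoid A →* M, and every subset P ⊆ M with L = φ ⁻¹' P, there exists a surjective monoid homomorphism ψ from the range submonoid of φ onto Q such that ψ (φ w) = π w for every w : FreeMonoid A. -/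
/-!
The syntactic congruence is the coarsest congruence whose classes do not split `L`. If
`L = φ ⁻¹' P`, the kernel congruence of `φ` does not split `L`, so it refines the syntactic
congruence; composing the first isomorphism theorem `mrange φ ≃* M ⧸ ker φ` with the induced map
`M ⧸ ker φ →* M ⧸ syntacticCon L` gives the surjection onto the syntactic monoid.
-/

namespace Con

variable {M N : Type*} [Monoid M] [Monoid N]

noncomputable def liftRange (c : Con M) (φ : M →* N) (h : ker φ ≤ c) :
    MonoidHom.mrange φ →* c.Quotient :=
  (map _ c h).comp (quotientKerEquivRange φ).symm.toMonoidHom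

theorem liftRange_mrangeRestrict (c : Con M) (φ : M →* N) (h : ker φ ≤ c) (w : M) :
    c.liftRange φ h (φ.mrangeRestrict w) = c.mk' w := by
  have hsymm : (quotientKerEquivRange φ).symm (φ.mrangeRestrict w) = (w : (ker φ).Quotient) :=
    (MulEquiv.symm_apply_eq _).2 rfl
  show map _ c h ((quotientKerEquivRange φ).symm _) = _
  rw [hsymm]
  rfl

theorem liftRange_surjective (c : Con M) (φ : M →* N) (h : ker φ ≤ c) :
    Function.Surjective (c.liftRange φ h) := by
  intro q
  obtain ⟨w, rfl⟩ := c.mk'_surjective q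
  exact ⟨_, c.liftRange_mrangeRestrict φ h w⟩

end Con

section Syntactic

variable {M : Type*} [Monoid M]

def syntacticCon (L : Set M) : Con M where
  r u v := ∀ x y, x * u * y ∈ L ↔ x * v * y ∈ L
  iseqv :=
    ⟨fun _ _ _ => Iff.rfl, fun h x y => (h x y).symm, fun h₁ h₂ x y => (h₁ x y).trans (h₂ x y)⟩
  mul' {u v u' v'} h h' x y := by
    have left := h x (u' * y)
    have right := h' (x * v) y
    simp only [mul_assoc] at left right ⊢
    exact left.trans right

theorem syntacticCon_iff {L : Set M} {u v : M} :
    syntacticCon L u v ↔ ∀ x y, x * u * y ∈ L ↔ x * v * y ∈ L :=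
  Iff.rfl

theorem mem_iff_of_syntacticCon {L : Set M} {u v : M} (h : syntacticCon L u v) :
    u ∈ L ↔ v ∈ L := by
  simpa using h 1 1

theorem preimage_image_mk'_syntacticCon (L : Set M) :
    (syntacticCon L).mk' ⁻¹' ((syntacticCon L).mk' '' L) = L := by
  refine Set.Subset.antisymm ?_ (Set.subset_preimage_image _ _)
  rintro u ⟨v, hv, hvu⟩
  exact (mem_iff_of_syntacticCon ((Con.eq _).1 hvu)).1 hv

theorem le_syntacticCon {L : Set M} {c : Con M} (hc : ∀ u v, c u v → (u ∈ L ↔ v ∈ L)) :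
    c ≤ syntacticCon L :=
  fun _ _ h x y => hc _ _ (c.mul (c.mul (c.refl x) h) (c.refl y))

theorem ker_le_syntacticCon {N : Type*} [Monoid N] {L : Set M} {φ : M →* N} {P : Set N}
    (hL : L = φ ⁻¹' P) : Con.ker φ ≤ syntacticCon L :=
  le_syntacticCon fun u v h => by rw [hL, Set.mem_preimage, Set.mem_preimage, (Con.ker_rel φ).1 h]

end Syntactic

/-- The syntactic congruence of a language `L ⊆ FreeMonoid A` (given by
`u ≈ v ↔ ∀ x y, x * u * y ∈ L ↔ x * v * y ∈ L`) is a monoid congruence, its quotient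
monoid recognizes `L` via the projection, and it divides every monoid recognizing `L`:
for every recognizer `(φ : FreeMonoid A →* M, P)` of `L` there is a surjective monoid
homomorphism from the range of `φ` onto the syntactic monoid compatible with the
projections. -/
theorem syntactic_monoid_recognizes_and_divides {A : Type*} (L : Set (FreeMonoid A)) :
    ∃ c : Con (FreeMonoid A),
      (∀ u v : FreeMonoid A, c u v ↔ ∀ x y : FreeMonoid A, (x * u * y ∈ L ↔ x * v * y ∈ L)) ∧
      L = c.mk' ⁻¹' (c.mk' '' L) ∧
      (∀ (M : Type*) [Monoid M] (φ : FreeMonoid A →* M) (P : Set M), L = φ ⁻¹' P →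
        ∃ ψ : MonoidHom.mrange φ →* c.Quotient, Function.Surjective ψ ∧
          ∀ w : FreeMonoid A, ψ ⟨φ w, MonoidHom.mem_mrange.mpr ⟨w, rfl⟩⟩ = c.mk' w) := by
  refine ⟨syntacticCon L, fun _ _ => syntacticCon_iff,
    (preimage_image_mk'_syntacticCon L).symm, fun M _ φ P hL => ?_⟩
  have hker := ker_le_syntacticCon hL
  exact ⟨_, Con.liftRange_surjective _ φ hker, Con.liftRange_mrangeRestrict _ φ hker⟩
end
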